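/- arXiv:1108.3905 — 5 statements merged into one kernel-verified Lean document; each statement's English description precedes it below -/
import Mathlib

section
/- Let V and W be finite-dimensional real inner product spaces with dim V = n and dim W = p, and let β : V × V → W be a symmetric bilinear form. For an integer 1 ≤ s ≤ p, define the s-nullity ν_s of β as the maximum over all s-dimensional subspaces U of W of the dimension of {x ∈ V : π_U(β(x,y)) = 0 for all y ∈ V}, where π_U is orthogonal projection onto U. Define R(x,y,z,w) = ⟨β(x,w),β(y,z)⟩ − ⟨β(x,z),β(y,w)⟩. Suppose 2p < n and ν_s < n − 2s for all 1 ≤ s ≤ p. If V = V₁ ⊕ V₂ is an orthogonal splitting such that R(x,y,z,u) = R(x,y,u,v) = R(x,u,v,w) = 0 for all x,y,z ∈ V₁ and u,v,w ∈ V₂, then span{β(x,y) : x ∈ V₁, y ∈ V₂} = 0. -/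
/-!
Restrict `β` to a bilinear map `γ : V₁ × V₂ → U`, where `U` is the span of the mixed values and
`s = dim U`. The Gauss equation `R(x, y, u, v) = 0` says exactly that `γ` is flat, and a flat
bilinear map vanishes on the kernel of `γ(x₀, ·)` for `x₀` of maximal rank: by lower
semicontinuity of the rank, `γ(y, ker γ(x₀, ·))` lies in the range of `γ(x₀, ·)`, while flatness
makes it orthogonal to that range. This gives `N₂ ⊆ V₂` of dimension `≥ dim V₂ - s` and,
symmetrically, `N₁ ⊆ V₁` of dimension `≥ dim V₁ - s` on which the mixed values vanish. The other
two Gauss equations put `N₁ ⊕ N₂` inside the `U`-nullity of `β`, so `ν_s ≥ n - 2s`, contradicting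
the hypothesis unless `U = 0`.
-/

open Module RealInnerProductSpace

/-- The "nullity subspace" of a bilinear map `β` relative to a subspace `U` of the target:
all `x` such that the orthogonal projection onto `U` of `β x y` vanishes for every `y`. -/
noncomputable def nullitySubspace {V W : Type*} [NormedAddCommGroup V]
    [InnerProductSpace ℝ V] [NormedAddCommGroup W] [InnerProductSpace ℝ W]
    [FiniteDimensional ℝ W] (β : V →ₗ[ℝ] V →ₗ[ℝ] W) (U : Submodule ℝ W) :
    Submodule ℝ V :=
  ⨅ y : V, LinearMap.ker (((U.orthogonalProjectionOnto).toLinearMap).comp (β.flip y))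

open LinearMap Submodule

theorem LinearMap.apply_mem_range_of_forall_finrank_range_add_smul_le
    {F G : Type*} [AddCommGroup F] [Module ℝ F] [NormedAddCommGroup G] [NormedSpace ℝ G]
    [FiniteDimensional ℝ G] (P Q : F →ₗ[ℝ] G)
    (hP : ∀ t : ℝ, finrank ℝ (range (P + t • Q)) ≤ finrank ℝ (range P))
    {k : F} (hk : k ∈ ker P) : Q k ∈ range P := by
  by_contra hQk
  set r := finrank ℝ (range P)
  let b := Module.finBasis ℝ (range P)
  choose v hv using fun i => (b i).2
  -- At `t = 0` these are a basis of `range P` together with `Q k ∉ range P`; for `t ≠ 0` they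
  -- all lie in `range (P + t • Q)`, since `(P + t • Q) k = t • Q k`.
  let f : ℝ → Fin (r + 1) → G := fun t => Fin.cons (Q k) fun i => (P + t • Q) (v i)
  have hf0 : LinearIndependent ℝ (f 0) := by
    have hb : LinearIndependent ℝ fun i => (b i : G) :=
      b.linearIndependent.map' (range P).subtype (range P).ker_subtype
    have hspan : span ℝ (Set.range fun i => (b i : G)) ≤ range P :=
      span_le.2 fun _ ⟨i, hi⟩ => hi ▸ (b i).2
    simp only [f, zero_smul, add_zero, hv]
    exact linearIndependent_finCons.2 ⟨hb, fun h => hQk (hspan h)⟩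
  have hf : Continuous f := by
    refine continuous_pi fun i => Fin.cases continuous_const (fun j => ?_) i
    simp only [f, Fin.cons_succ, add_apply, smul_apply]
    fun_prop
  obtain ⟨t, hft, ht⟩ :=
    (((hf.tendsto 0).eventually hf0.eventually).filter_mono
      (nhdsWithin_le_nhds (s := {0}ᶜ))).and self_mem_nhdsWithin |>.exists
  have hrange : Set.range (f t) ⊆ range (P + t • Q) := by
    rintro _ ⟨i, rfl⟩
    refine Fin.cases ?_ (fun j => mem_range_self _ _) i
    have : (P + t • Q) (t⁻¹ • k) = Q k := by
      simp [mem_ker.1 hk, smul_smul, inv_mul_cancel₀ ht]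
    exact ⟨t⁻¹ • k, this⟩
  have := finrank_mono (span_le.2 hrange)
  rw [finrank_span_eq_card hft, Fintype.card_fin] at this
  exact absurd (hP t) (by omega)

section Flat

variable {E F G : Type*} [AddCommGroup E] [Module ℝ E] [AddCommGroup F] [Module ℝ F]
  [NormedAddCommGroup G] [InnerProductSpace ℝ G]

def LinearMap.IsFlat (A : E →ₗ[ℝ] F →ₗ[ℝ] G) : Prop :=
  ∀ x y u v, ⟪A x u, A y v⟫ = ⟪A x v, A y u⟫

namespace LinearMap.IsFlat

variable {A : E →ₗ[ℝ] F →ₗ[ℝ] G}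

theorem flip (hA : A.IsFlat) : A.flip.IsFlat := fun u v x y => by
  simp only [flip_apply]
  rw [hA, real_inner_comm]

theorem apply_eq_zero_of_mem_ker [FiniteDimensional ℝ G] (hA : A.IsFlat) {x₀ : E}
    (hx₀ : ∀ x, finrank ℝ (range (A x)) ≤ finrank ℝ (range (A x₀))) (y : E) {k : F}
    (hk : k ∈ ker (A x₀)) : A y k = 0 := by
  have hmax : ∀ t : ℝ, finrank ℝ (range (A x₀ + t • A y)) ≤ finrank ℝ (range (A x₀)) :=
    fun t => by rw [← map_smul, ← map_add]; exact hx₀ _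
  obtain ⟨w, hw⟩ := (A x₀).apply_mem_range_of_forall_finrank_range_add_smul_le (A y) hmax hk
  rw [← inner_self_eq_zero (𝕜 := ℝ)]
  nth_rw 1 [← hw]
  rw [hA, mem_ker.1 hk, inner_zero_left]

theorem exists_finrank_le_add [FiniteDimensional ℝ F] [FiniteDimensional ℝ G]
    (hA : A.IsFlat) :
    ∃ N : Submodule ℝ F, (∀ x, ∀ u ∈ N, A x u = 0) ∧
      finrank ℝ F ≤ finrank ℝ G + finrank ℝ N := by
  have hbdd : BddAbove (Set.range fun x => finrank ℝ (range (A x))) :=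
    ⟨finrank ℝ G, by rintro _ ⟨x, rfl⟩; exact finrank_le _⟩
  obtain ⟨_, ⟨x₀, rfl⟩, hx₀⟩ := hbdd.exists_isGreatest_of_nonempty (Set.range_nonempty _)
  refine ⟨ker (A x₀), fun y _ hk =>
    hA.apply_eq_zero_of_mem_ker (fun x => hx₀ ⟨x, rfl⟩) y hk, ?_⟩
  have := (A x₀).finrank_range_add_finrank_ker
  have := finrank_le (range (A x₀))
  omega

end LinearMap.IsFlat

end Flat

theorem Submodule.mem_orthogonal_span_iff {𝕜 E : Type*} [RCLike 𝕜] [NormedAddCommGroup E]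
    [InnerProductSpace 𝕜 E] {s : Set E} {v : E} :
    v ∈ (span 𝕜 s)ᗮ ↔ ∀ u ∈ s, inner 𝕜 u v = 0 := by
  rw [← span_singleton_le_iff_mem, ← isOrtho_iff_le, isOrtho_comm, isOrtho_span]
  simp

section Nullity

variable {V W : Type*} [NormedAddCommGroup V] [InnerProductSpace ℝ V]
  [NormedAddCommGroup W] [InnerProductSpace ℝ W]

/-- `curvatureTensor β x y z w` is the `R(x, y, z, w)` of the Gauss equation with `c = 0`. -/
def curvatureTensor (β : V →ₗ[ℝ] V →ₗ[ℝ] W) (x y z w : V) : ℝ :=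
  ⟪β x w, β y z⟫ - ⟪β x z, β y w⟫

noncomputable def mixedSpan (β : V →ₗ[ℝ] V →ₗ[ℝ] W) (V₁ V₂ : Submodule ℝ V) :
    Submodule ℝ W :=
  span ℝ {w | ∃ x ∈ V₁, ∃ y ∈ V₂, w = β x y}

variable [FiniteDimensional ℝ W] {β : V →ₗ[ℝ] V →ₗ[ℝ] W}

theorem mem_nullitySubspace_iff {U : Submodule ℝ W} {z : V} :
    z ∈ nullitySubspace β U ↔ ∀ y, β z y ∈ Uᗮ := by
  simp only [nullitySubspace, mem_iInf, mem_ker, comp_apply, flip_apply,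
    ContinuousLinearMap.coe_coe, orthogonalProjectionOnto_eq_zero_iff]

variable {V₁ : Submodule ℝ V} [V₁.HasOrthogonalProjection]

theorem mem_nullitySubspace_mixedSpan_of_left
    (hR1 : ∀ x ∈ V₁, ∀ y ∈ V₁, ∀ z ∈ V₁, ∀ u ∈ V₁ᗮ, curvatureTensor β x y z u = 0)
    {x : V} (hx : x ∈ V₁) (hxβ : ∀ u ∈ V₁ᗮ, β x u = 0) :
    x ∈ nullitySubspace β (mixedSpan β V₁ V₁ᗮ) := by
  refine mem_nullitySubspace_iff.2 fun y => mem_orthogonal_span_iff.2 ?_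
  rintro _ ⟨a, ha, b, hb, rfl⟩
  obtain ⟨y₁, hy₁, y₂, hy₂, rfl⟩ := V₁.exists_add_mem_mem_orthogonal y
  have h := hR1 a ha x hx y₁ hy₁ b hb
  rw [curvatureTensor, hxβ b hb, inner_zero_right, sub_zero] at h
  rw [map_add, hxβ y₂ hy₂, add_zero, h]

theorem mem_nullitySubspace_mixedSpan_of_right (hsym : ∀ x y, β x y = β y x)
    (hR3 : ∀ x ∈ V₁, ∀ u ∈ V₁ᗮ, ∀ v ∈ V₁ᗮ, ∀ w ∈ V₁ᗮ, curvatureTensor β x u v w = 0)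
    {u : V} (hu : u ∈ V₁ᗮ) (huβ : ∀ x ∈ V₁, β x u = 0) :
    u ∈ nullitySubspace β (mixedSpan β V₁ V₁ᗮ) := by
  refine mem_nullitySubspace_iff.2 fun y => mem_orthogonal_span_iff.2 ?_
  rintro _ ⟨a, ha, b, hb, rfl⟩
  obtain ⟨y₁, hy₁, y₂, hy₂, rfl⟩ := V₁.exists_add_mem_mem_orthogonal y
  have h := hR3 a ha y₂ hy₂ u hu b hb
  rw [curvatureTensor, huβ a ha, inner_zero_left, sub_zero] at h
  rw [map_add, hsym u, huβ y₁ hy₁, zero_add, hsym u, h]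

theorem finrank_sub_two_mul_le_finrank_nullitySubspace [FiniteDimensional ℝ V]
    (hsym : ∀ x y, β x y = β y x)
    (hR1 : ∀ x ∈ V₁, ∀ y ∈ V₁, ∀ z ∈ V₁, ∀ u ∈ V₁ᗮ, curvatureTensor β x y z u = 0)
    (hR2 : ∀ x ∈ V₁, ∀ y ∈ V₁, ∀ u ∈ V₁ᗮ, ∀ v ∈ V₁ᗮ, curvatureTensor β x y u v = 0)
    (hR3 : ∀ x ∈ V₁, ∀ u ∈ V₁ᗮ, ∀ v ∈ V₁ᗮ, ∀ w ∈ V₁ᗮ, curvatureTensor β x u v w = 0) :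
    finrank ℝ V - 2 * finrank ℝ (mixedSpan β V₁ V₁ᗮ) ≤
      finrank ℝ (nullitySubspace β (mixedSpan β V₁ V₁ᗮ)) := by
  set U := mixedSpan β V₁ V₁ᗮ
  let γ : V₁ →ₗ[ℝ] V₁ᗮ →ₗ[ℝ] U := (β.domRestrict₁₂ V₁ V₁ᗮ).codRestrict₂ U.subtype
    U.injective_subtype fun x u => by
      rw [range_subtype]; exact subset_span ⟨x, x.2, u, u.2, rfl⟩
  have hγ (x : V₁) (u : V₁ᗮ) : (γ x u : W) = β x u :=
    codRestrict₂_apply (β.domRestrict₁₂ V₁ V₁ᗮ) U.subtype _ _ x u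
  have hflat : γ.IsFlat := fun x y u v => by
    simp only [coe_inner, hγ]
    exact (sub_eq_zero.1 (hR2 x x.2 y y.2 u u.2 v v.2)).symm
  obtain ⟨N₂, hN₂, hdim₂⟩ := hflat.exists_finrank_le_add
  obtain ⟨N₁, hN₁, hdim₁⟩ := hflat.flip.exists_finrank_le_add
  have hle : N₁.map V₁.subtype ⊔ N₂.map V₁ᗮ.subtype ≤ nullitySubspace β U := by
    refine sup_le ?_ ?_
    · rintro _ ⟨x, hx, rfl⟩
      refine mem_nullitySubspace_mixedSpan_of_left hR1 x.2 fun u hu => ?_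
      simpa [hγ] using congrArg Subtype.val (hN₁ ⟨u, hu⟩ x hx)
    · rintro _ ⟨u, hu, rfl⟩
      refine mem_nullitySubspace_mixedSpan_of_right hsym hR3 u.2 fun x hx => ?_
      simpa [hγ] using congrArg Subtype.val (hN₂ ⟨x, hx⟩ u hu)
  have hdisj : Disjoint (N₁.map V₁.subtype) (N₂.map V₁ᗮ.subtype) :=
    V₁.orthogonal_disjoint.mono (map_subtype_le _ _) (map_subtype_le _ _)
  have hsup := finrank_sup_add_finrank_inf_eq (N₁.map V₁.subtype) (N₂.map V₁ᗮ.subtype)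
  rw [hdisj.eq_bot, finrank_bot, finrank_map_subtype_eq, finrank_map_subtype_eq] at hsup
  have := finrank_mono hle
  have := V₁.finrank_add_finrank_orthogonal
  omega

end Nullity

theorem stmt_0_general {V W : Type*} [NormedAddCommGroup V] [InnerProductSpace ℝ V]
    [FiniteDimensional ℝ V] [NormedAddCommGroup W] [InnerProductSpace ℝ W]
    [FiniteDimensional ℝ W] {n p : ℕ}
    (hn : finrank ℝ V = n) (hp : finrank ℝ W = p)
    (β : V →ₗ[ℝ] V →ₗ[ℝ] W) (hsym : ∀ x y, β x y = β y x)
    (hnull : ∀ s : ℕ, 1 ≤ s → s ≤ p → ∀ U : Submodule ℝ W, finrank ℝ U = s →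
      finrank ℝ (nullitySubspace β U) < n - 2 * s)
    (V₁ V₂ : Submodule ℝ V) (hsplit : V₂ = V₁ᗮ)
    (hR1 : ∀ x ∈ V₁, ∀ y ∈ V₁, ∀ z ∈ V₁, ∀ u ∈ V₂,
      ⟪β x u, β y z⟫ - ⟪β x z, β y u⟫ = 0)
    (hR2 : ∀ x ∈ V₁, ∀ y ∈ V₁, ∀ u ∈ V₂, ∀ v ∈ V₂,
      ⟪β x v, β y u⟫ - ⟪β x u, β y v⟫ = 0)
    (hR3 : ∀ x ∈ V₁, ∀ u ∈ V₂, ∀ v ∈ V₂, ∀ w ∈ V₂,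
      ⟪β x w, β u v⟫ - ⟪β x v, β u w⟫ = 0) :
    Submodule.span ℝ {w : W | ∃ x ∈ V₁, ∃ y ∈ V₂, w = β x y} = ⊥ := by
  subst hsplit hn
  by_contra hU
  have hs : 1 ≤ finrank ℝ (mixedSpan β V₁ V₁ᗮ) :=
    Nat.one_le_iff_ne_zero.2 fun h => hU (finrank_eq_zero.1 h)
  have hlt := hnull _ hs (hp ▸ finrank_le _) _ rfl
  have hle := finrank_sub_two_mul_le_finrank_nullitySubspace hsym hR1 hR2 hR3
  omega

theorem stmt_0 {V W : Type*} [NormedAddCommGroup V] [InnerProductSpace ℝ V]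
    [FiniteDimensional ℝ V] [NormedAddCommGroup W] [InnerProductSpace ℝ W]
    [FiniteDimensional ℝ W] {n p : ℕ}
    (hn : finrank ℝ V = n) (hp : finrank ℝ W = p)
    (β : V →ₗ[ℝ] V →ₗ[ℝ] W) (hsym : ∀ x y, β x y = β y x)
    (hpn : 2 * p < n)
    (hnull : ∀ s : ℕ, 1 ≤ s → s ≤ p → ∀ U : Submodule ℝ W, finrank ℝ U = s →
      finrank ℝ (nullitySubspace β U) < n - 2 * s)
    (V₁ V₂ : Submodule ℝ V) (hsplit : V₂ = V₁ᗮ)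
    (hR1 : ∀ x ∈ V₁, ∀ y ∈ V₁, ∀ z ∈ V₁, ∀ u ∈ V₂,
      ⟪β x u, β y z⟫ - ⟪β x z, β y u⟫ = 0)
    (hR2 : ∀ x ∈ V₁, ∀ y ∈ V₁, ∀ u ∈ V₂, ∀ v ∈ V₂,
      ⟪β x v, β y u⟫ - ⟪β x u, β y v⟫ = 0)
    (hR3 : ∀ x ∈ V₁, ∀ u ∈ V₂, ∀ v ∈ V₂, ∀ w ∈ V₂,
      ⟪β x w, β u v⟫ - ⟪β x v, β u w⟫ = 0) :
    Submodule.span ℝ {w : W | ∃ x ∈ V₁, ∃ y ∈ V₂, w = β x y} = ⊥ :=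
  stmt_0_general hn hp β hsym hnull V₁ V₂ hsplit hR1 hR2 hR3
end

section
/- Let V and W be finite-dimensional real inner product spaces and β : V × V → W a symmetric bilinear form with orthogonal splitting V = V₁ ⊕ V₂. Define R(x,y,z,w) = ⟨β(x,w),β(y,z)⟩ − ⟨β(x,z),β(y,w)⟩ and suppose R(x,y,v,u) = 0 for all x,y ∈ V₁ and u,v ∈ V₂. For x ∈ V₁ let B_x : V₂ → W be the linear map B_x(v) = β(x,v). If x ∈ V₁ is chosen so that rank B_x is maximal among all rank B_y for y ∈ V₁, then ker B_x ⊆ ker B_y for every y ∈ V₁. -/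
/-!
Let `B_z := β z` restricted to `V₂`, let `v ∈ ker B_x` and suppose `B_y v ≠ 0`. The curvature
condition makes `⟪B_x u, B_y v⟫ = ⟪B_x v, B_y u⟫ = 0` for all `u ∈ V₂`, so `B_y v` is a nonzero
vector orthogonal to, hence outside, `range B_x`. Take `u_i` with `B_x u_i` a basis of `range B_x`.
The vectors `B_{x+ty} u_i` together with `B_y v = B_{x+ty}(t⁻¹ v)` lie in `range B_{x+ty}` and are
linearly independent for `t = 0`, hence for some small `t ≠ 0`; then `rank B_{x+ty} > rank B_x`.
-/

open Module RealInnerProductSpace LinearMap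

section RankPerturbation

variable {𝕜 E F : Type*} [NontriviallyNormedField 𝕜] [CompleteSpace 𝕜]
  [AddCommGroup E] [Module 𝕜 E] [NormedAddCommGroup F] [NormedSpace 𝕜 F]

theorem exists_ne_zero_linearIndependent_of_continuous {ι : Type*} [Finite ι] {w : 𝕜 → ι → F}
    (hw : Continuous w) (h0 : LinearIndependent 𝕜 (w 0)) :
    ∃ t ≠ 0, LinearIndependent 𝕜 (w t) :=
  (((hw.tendsto 0).eventually h0.eventually).filter_mono (nhdsWithin_le_nhds (s := {0}ᶜ))).and
    self_mem_nhdsWithin |>.exists.imp fun _ ⟨hind, hne⟩ => ⟨hne, hind⟩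

theorem LinearMap.exists_finrank_range_lt_finrank_range_add_smul [FiniteDimensional 𝕜 F]
    (f g : E →ₗ[𝕜] F) {v : E} (hv : f v = 0) (hgv : g v ∉ range f) :
    ∃ t : 𝕜, finrank 𝕜 (range f) < finrank 𝕜 (range (f + t • g)) := by
  set k := finrank 𝕜 (range f)
  let b := Module.finBasis 𝕜 (range f)
  choose u hu using fun i => (b i).2
  let w : 𝕜 → Fin (k + 1) → F := fun t => Fin.snoc (fun i => (f + t • g) (u i)) (g v)
  have hw : Continuous w := by
    refine continuous_pi fun i => Fin.lastCases ?_ (fun j => ?_) i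
    · simp only [w, Fin.snoc_last]
      exact continuous_const
    · simp only [w, Fin.snoc_castSucc, add_apply, smul_apply]
      fun_prop
  have hw0 : LinearIndependent 𝕜 (w 0) := by
    have hw0_eq : w 0 = Fin.snoc ((range f).subtype ∘ b) (g v) := by
      ext i
      refine Fin.lastCases ?_ (fun j => ?_) i <;> simp [w, hu]
    rw [hw0_eq]
    exact linearIndependent_finSnoc.2 ⟨b.linearIndependent.map' _ (Submodule.ker_subtype _),
      fun hspan => hgv (Submodule.span_le.2 (Set.range_subset_iff.2 fun i => (b i).2) hspan)⟩
  obtain ⟨t, ht, hind⟩ := exists_ne_zero_linearIndependent_of_continuous hw hw0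
  have hmem : ∀ i, w t i ∈ range (f + t • g) := by
    refine fun i => Fin.lastCases ⟨t⁻¹ • v, ?_⟩ (fun j => ⟨u j, ?_⟩) i
    · simp [w, hv, smul_smul, ht]
    · simp [w]
  refine ⟨t, ?_⟩
  calc k < finrank 𝕜 (Submodule.span 𝕜 (Set.range (w t))) := by
        rw [finrank_span_eq_card hind]
        simp
    _ ≤ finrank 𝕜 (range (f + t • g)) :=
        Submodule.finrank_mono (Submodule.span_le.2 (Set.range_subset_iff.2 hmem))

end RankPerturbation

section InnerProduct

variable {E W : Type*} [AddCommGroup E] [Module ℝ E]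
  [NormedAddCommGroup W] [InnerProductSpace ℝ W]

theorem LinearMap.apply_notMem_range_of_inner_comm {f g : E →ₗ[ℝ] W}
    (hfg : ∀ u v, ⟪f u, g v⟫ = ⟪f v, g u⟫) {v : E} (hv : f v = 0) (hgv : g v ≠ 0) :
    g v ∉ range f := by
  rintro ⟨u, hu⟩
  have horth : ⟪f u, g v⟫ = 0 := by rw [hfg, hv, inner_zero_left]
  rw [hu, inner_self_eq_zero] at horth
  exact hgv horth

theorem LinearMap.ker_le_ker_of_finrank_range_add_smul_le [FiniteDimensional ℝ W]
    {f g : E →ₗ[ℝ] W} (hfg : ∀ u v, ⟪f u, g v⟫ = ⟪f v, g u⟫)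
    (hmax : ∀ t : ℝ, finrank ℝ (range (f + t • g)) ≤ finrank ℝ (range f)) :
    ker f ≤ ker g := by
  intro v hv
  by_contra hgv
  obtain ⟨t, ht⟩ := exists_finrank_range_lt_finrank_range_add_smul f g hv
    (apply_notMem_range_of_inner_comm hfg hv hgv)
  exact (hmax t).not_gt ht

end InnerProduct

theorem stmt_1_general {V W : Type*} [NormedAddCommGroup V] [InnerProductSpace ℝ V]
    [NormedAddCommGroup W] [InnerProductSpace ℝ W]
    [FiniteDimensional ℝ W]
    (β : V →ₗ[ℝ] V →ₗ[ℝ] W)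
    (V₁ V₂ : Submodule ℝ V)
    -- R(x,y,v,u) = ⟨β(x,u),β(y,v)⟩ − ⟨β(x,v),β(y,u)⟩ = 0 for x,y ∈ V₁, u,v ∈ V₂
    (hR : ∀ x ∈ V₁, ∀ y ∈ V₁, ∀ u ∈ V₂, ∀ v ∈ V₂,
      ⟪β x u, β y v⟫ - ⟪β x v, β y u⟫ = 0)
    (x : V) (hx : x ∈ V₁)
    -- B_x : V₂ → W, v ↦ β x v, has maximal rank among all B_y, y ∈ V₁
    (hmax : ∀ y ∈ V₁,
      finrank ℝ (LinearMap.range ((β y).comp V₂.subtype)) ≤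
        finrank ℝ (LinearMap.range ((β x).comp V₂.subtype))) :
    ∀ y ∈ V₁, LinearMap.ker ((β x).comp V₂.subtype) ≤
      LinearMap.ker ((β y).comp V₂.subtype) := by
  intro y hy
  refine ker_le_ker_of_finrank_range_add_smul_le
    (fun u v => sub_eq_zero.1 (hR x hx y hy u u.2 v v.2)) fun t => ?_
  have hcomb : (β x).comp V₂.subtype + t • (β y).comp V₂.subtype =
      (β (x + t • y)).comp V₂.subtype := by
    ext
    simp
  rw [hcomb]
  exact hmax _ (V₁.add_mem hx (V₁.smul_mem t hy))

theorem stmt_1 {V W : Type*} [NormedAddCommGroup V] [InnerProductSpace ℝ V]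
    [FiniteDimensional ℝ V] [NormedAddCommGroup W] [InnerProductSpace ℝ W]
    [FiniteDimensional ℝ W]
    (β : V →ₗ[ℝ] V →ₗ[ℝ] W) (hsym : ∀ x y, β x y = β y x)
    (V₁ V₂ : Submodule ℝ V) (hsplit : V₂ = V₁ᗮ)
    -- R(x,y,v,u) = ⟨β(x,u),β(y,v)⟩ − ⟨β(x,v),β(y,u)⟩ = 0 for x,y ∈ V₁, u,v ∈ V₂
    (hR : ∀ x ∈ V₁, ∀ y ∈ V₁, ∀ u ∈ V₂, ∀ v ∈ V₂,
      ⟪β x u, β y v⟫ - ⟪β x v, β y u⟫ = 0)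
    (x : V) (hx : x ∈ V₁)
    -- B_x : V₂ → W, v ↦ β x v, has maximal rank among all B_y, y ∈ V₁
    (hmax : ∀ y ∈ V₁,
      finrank ℝ (LinearMap.range ((β y).comp V₂.subtype)) ≤
        finrank ℝ (LinearMap.range ((β x).comp V₂.subtype))) :
    ∀ y ∈ V₁, LinearMap.ker ((β x).comp V₂.subtype) ≤
      LinearMap.ker ((β y).comp V₂.subtype) :=
  stmt_1_general β V₁ V₂ hR x hx hmax
end

section
/- Let V, W be finite-dimensional real inner product spaces and B_t : V → W a family of linear maps of the form B_t = B + tC (t ∈ ℝ) with rank B_t ≤ ℓ for all t. Suppose v, e₁, …, e_ℓ ∈ V satisfy Bv = 0, ⟨Be_j, Cv⟩ = 0 for all j, and Be₁, …, Be_ℓ are linearly independent. Then Cv = 0. -/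
/-!
For `t ≠ 0` the `ℓ + 1` vectors `Cv = (B + tC)(t⁻¹v)` and `(B + tC) e_j` lie in the range of
`B + tC`, of dimension at most `ℓ`, so they are linearly dependent. Linear dependence is a closed
condition, so it persists at `t = 0`. But there `Cv` is a nonzero vector orthogonal to the
linearly independent `B e_j`, so `Cv, B e_1, …, B e_ℓ` are independent.
-/

open Module RealInnerProductSpace Filter Topology

theorem LinearIndependent.finCons_of_forall_inner_eq_zero {𝕜 E : Type*} [RCLike 𝕜]
    [NormedAddCommGroup E] [InnerProductSpace 𝕜 E] {n : ℕ} {x : E} {v : Fin n → E}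
    (hv : LinearIndependent 𝕜 v) (hx : x ≠ 0) (hxv : ∀ j, inner 𝕜 (v j) x = 0) :
    LinearIndependent 𝕜 (Fin.cons x v : Fin (n + 1) → E) := by
  refine hv.finCons fun hmem => hx ?_
  have hspan : Submodule.span 𝕜 (Set.range v) ≤ (𝕜 ∙ x)ᗮ := by
    rw [Submodule.span_le]
    rintro _ ⟨j, rfl⟩
    exact Submodule.mem_orthogonal_singleton_iff_inner_left.mpr (hxv j)
  exact inner_self_eq_zero.mp (Submodule.mem_orthogonal_singleton_iff_inner_right.mp (hspan hmem))

theorem not_linearIndependent_of_forall_mem_of_finrank_le {K M : Type*} [DivisionRing K]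
    [AddCommGroup M] [Module K M] {S : Submodule K M} [Module.Finite K S] {n : ℕ}
    (hS : finrank K S ≤ n) {f : Fin (n + 1) → M} (hf : ∀ i, f i ∈ S) :
    ¬ LinearIndependent K f := by
  intro h
  have hcard := (LinearIndependent.of_comp S.subtype
    (v := fun i => (⟨f i, hf i⟩ : S)) h).fintype_card_le_finrank
  rw [Fintype.card_fin] at hcard
  omega

theorem ContinuousAt.not_linearIndependent_of_forall_ne {𝕜 E X ι : Type*}
    [NontriviallyNormedField 𝕜] [CompleteSpace 𝕜] [NormedAddCommGroup E] [NormedSpace 𝕜 E]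
    [FiniteDimensional 𝕜 E] [Finite ι] [TopologicalSpace X] {x₀ : X} [(𝓝[≠] x₀).NeBot]
    {f : X → ι → E} (hf : ContinuousAt f x₀) (hdep : ∀ x ≠ x₀, ¬ LinearIndependent 𝕜 (f x)) :
    ¬ LinearIndependent 𝕜 (f x₀) := fun h =>
  let ⟨x, hx, hne⟩ := ((hf.eventually h.eventually).filter_mono nhdsWithin_le_nhds).and
    (self_mem_nhdsWithin (s := {x₀}ᶜ)) |>.exists
  hdep x hne hx

theorem stmt_2_general {V W : Type*} [NormedAddCommGroup V] [InnerProductSpace ℝ V]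
    [NormedAddCommGroup W] [InnerProductSpace ℝ W]
    [FiniteDimensional ℝ W]
    (B C : V →ₗ[ℝ] W) (ℓ : ℕ)
    (hrank : ∀ t : ℝ, finrank ℝ (LinearMap.range (B + t • C)) ≤ ℓ)
    (v : V) (e : Fin ℓ → V)
    (hv : B v = 0)
    (horth : ∀ j, ⟪B (e j), C v⟫ = 0)
    (hli : LinearIndependent ℝ (fun j => B (e j))) :
    C v = 0 := by
  by_contra hCv
  set g : ℝ → Fin (ℓ + 1) → W := fun t => Fin.cons (C v) fun j => (B + t • C) (e j)
  have hg : Continuous g := continuous_pi fun i => Fin.cases continuous_const (fun j => by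
    simp only [g, Fin.cons_succ, LinearMap.add_apply, LinearMap.smul_apply]
    fun_prop) i
  have hdep : ∀ t ≠ 0, ¬ LinearIndependent ℝ (g t) := fun t ht =>
    not_linearIndependent_of_forall_mem_of_finrank_le (hrank t) fun i => Fin.cases
      ⟨t⁻¹ • v, by simp [g, hv, smul_smul, inv_mul_cancel₀ ht]⟩ (fun j => ⟨e j, rfl⟩) i
  refine hg.continuousAt.not_linearIndependent_of_forall_ne hdep ?_
  simpa [g] using hli.finCons_of_forall_inner_eq_zero hCv horth

theorem stmt_2 {V W : Type*} [NormedAddCommGroup V] [InnerProductSpace ℝ V]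
    [FiniteDimensional ℝ V] [NormedAddCommGroup W] [InnerProductSpace ℝ W]
    [FiniteDimensional ℝ W]
    (B C : V →ₗ[ℝ] W) (ℓ : ℕ)
    (hrank : ∀ t : ℝ, finrank ℝ (LinearMap.range (B + t • C)) ≤ ℓ)
    (v : V) (e : Fin ℓ → V)
    (hv : B v = 0)
    (horth : ∀ j, ⟪B (e j), C v⟫ = 0)
    (hli : LinearIndependent ℝ (fun j => B (e j))) :
    C v = 0 :=
  stmt_2_general B C ℓ hrank v e hv horth hli
end

section
/- Let V, W be finite-dimensional real inner product spaces, β : V × V → W a symmetric bilinear form, V = V₁ ⊕ V₂ an orthogonal splitting, and suppose R(x,u,w,v) = 0 for all x ∈ V₁ and u,v,w ∈ V₂, where R(x,y,z,w) = ⟨β(x,w),β(y,z)⟩ − ⟨β(x,z),β(y,w)⟩. Let S = span{β(x,y) : x ∈ V₁, y ∈ V₂}. Suppose e₁,…,e_ℓ is an orthonormal basis of a subspace E ⊆ V₂ such that for every y ∈ V₁ and v ∈ V₂, β(y,v) = Σ_j ⟨v,e_j⟩ β(y,e_j). Then for all u,v ∈ V₂, the vector β(u,v) − Σ_{i,j}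 ⟨u,e_i⟩⟨v,e_j⟩ β(e_i,e_j) is orthogonal to S. -/
/-! For fixed `x ∈ V₁`, the hypothesis on `R` together with the symmetry of `β` makes the trilinear
form `(a, b, c) ↦ ⟪β x a, β b c⟫` fully symmetric on `V₂`. So the expansion `β x v = β x (P v)`,
with `P v = ∑ⱼ ⟪v, eⱼ⟫ eⱼ`, may be applied in any slot; applying it to the two slots of `β u v`
shows that `β u v` and `β (P u) (P v)` have the same inner product with every `β x y`. -/

open Module RealInnerProductSpace

theorem Submodule.mem_orthogonal_span_iff_s3 {W : Type*} [NormedAddCommGroup W]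
    [InnerProductSpace ℝ W] {s : Set W} {w : W} :
    w ∈ (Submodule.span ℝ s)ᗮ ↔ ∀ z ∈ s, ⟪z, w⟫ = 0 := by
  rw [← Submodule.span_singleton_le_iff_mem, ← Submodule.isOrtho_iff_le, Submodule.isOrtho_span]
  simp [real_inner_comm]

theorem LinearMap.map_sum_smul₂ {R M N P ι κ : Type*} [CommSemiring R] [AddCommMonoid M]
    [AddCommMonoid N] [AddCommMonoid P] [Module R M] [Module R N] [Module R P]
    (f : M →ₗ[R] N →ₗ[R] P) (s : Finset ι) (t : Finset κ) (a : ι → R) (b : κ → R)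
    (x : ι → M) (y : κ → N) :
    f (∑ i ∈ s, a i • x i) (∑ j ∈ t, b j • y j) = ∑ i ∈ s, ∑ j ∈ t, (a i * b j) • f (x i) (y j) := by
  simp only [map_sum, map_smul, LinearMap.sum_apply, LinearMap.smul_apply, Finset.smul_sum,
    smul_smul]
  rw [Finset.sum_comm]
  simp only [mul_comm]

section

variable {V W : Type*} [NormedAddCommGroup V] [InnerProductSpace ℝ V]
  [NormedAddCommGroup W] [InnerProductSpace ℝ W]
variable {β : V →ₗ[ℝ] V →ₗ[ℝ] W} (hsym : ∀ x y, β x y = β y x) {V₁ V₂ : Submodule ℝ V}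
  (hR : ∀ x ∈ V₁, ∀ u ∈ V₂, ∀ a ∈ V₂, ∀ b ∈ V₂, ⟪β x a, β u b⟫ = ⟪β x b, β u a⟫)
include hsym hR

theorem inner_apply_swap_of_mem {x : V} (hx : x ∈ V₁) {a b c : V}
    (ha : a ∈ V₂) (hb : b ∈ V₂) (hc : c ∈ V₂) :
    ⟪β x a, β b c⟫ = ⟪β x b, β a c⟫ := by
  rw [hsym b c, hR x hx c hc a ha b hb, hsym c a]

theorem inner_apply_eq_of_apply_left_eq {x : V} (hx : x ∈ V₁) {y u v p : V}
    (hy : y ∈ V₂) (hu : u ∈ V₂) (hv : v ∈ V₂) (hp : p ∈ V₂) (hup : β x u = β x p) :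
    ⟪β x y, β u v⟫ = ⟪β x y, β p v⟫ := by
  rw [inner_apply_swap_of_mem hsym hR hx hy hu hv, hup,
    inner_apply_swap_of_mem hsym hR hx hp hy hv]

theorem inner_apply_eq_of_apply_left_eq₂ {x : V} (hx : x ∈ V₁) {y u v p q : V}
    (hy : y ∈ V₂) (hu : u ∈ V₂) (hv : v ∈ V₂) (hp : p ∈ V₂) (hq : q ∈ V₂)
    (hup : β x u = β x p) (hvq : β x v = β x q) :
    ⟪β x y, β u v⟫ = ⟪β x y, β p q⟫ := by
  rw [inner_apply_eq_of_apply_left_eq hsym hR hx hy hu hv hp hup, hsym p v,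
    inner_apply_eq_of_apply_left_eq hsym hR hx hy hv hp hq hvq, hsym q p]

end

theorem stmt_3_general {V W : Type*} [NormedAddCommGroup V] [InnerProductSpace ℝ V]
    [NormedAddCommGroup W] [InnerProductSpace ℝ W]
    (β : V →ₗ[ℝ] V →ₗ[ℝ] W) (hsym : ∀ x y, β x y = β y x)
    (V₁ V₂ : Submodule ℝ V)
    -- R(x,u,w,v) = ⟨β(x,v),β(u,w)⟩ − ⟨β(x,w),β(u,v)⟩ = 0 for x ∈ V₁, u,v,w ∈ V₂
    (hR : ∀ x ∈ V₁, ∀ u ∈ V₂, ∀ v ∈ V₂, ∀ w ∈ V₂,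
      ⟪β x v, β u w⟫ - ⟪β x w, β u v⟫ = 0)
    (ℓ : ℕ) (e : Fin ℓ → V) (he : ∀ j, e j ∈ V₂)
    (hexp : ∀ y ∈ V₁, ∀ v ∈ V₂, β y v = ∑ j, ⟪v, e j⟫ • β y (e j)) :
    ∀ u ∈ V₂, ∀ v ∈ V₂,
      (β u v - ∑ i, ∑ j, (⟪u, e i⟫ * ⟪v, e j⟫) • β (e i) (e j)) ∈
        (Submodule.span ℝ {w : W | ∃ x ∈ V₁, ∃ y ∈ V₂, w = β x y})ᗮ := by
  intro u hu v hv
  have hR' : ∀ x ∈ V₁, ∀ u ∈ V₂, ∀ a ∈ V₂, ∀ b ∈ V₂, ⟪β x a, β u b⟫ = ⟪β x b, β u a⟫ :=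
    fun x hx u hu a ha b hb ↦ sub_eq_zero.mp (hR x hx u hu a ha b hb)
  set P : V → V := fun w ↦ ∑ j, ⟪w, e j⟫ • e j
  have hP : ∀ w, P w ∈ V₂ := fun w ↦ Submodule.sum_mem _ fun j _ ↦ Submodule.smul_mem _ _ (he j)
  have hβP : ∀ x ∈ V₁, ∀ w ∈ V₂, β x w = β x (P w) := by
    intro x hx w hw
    simp only [P, map_sum, map_smul, hexp x hx w hw]
  rw [← LinearMap.map_sum_smul₂, Submodule.mem_orthogonal_span_iff_s3]
  rintro _ ⟨x, hx, y, hy, rfl⟩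
  rw [inner_sub_right, sub_eq_zero]
  exact inner_apply_eq_of_apply_left_eq₂ hsym hR' hx hy hu hv (hP u) (hP v)
    (hβP x hx u hu) (hβP x hx v hv)

theorem stmt_3 {V W : Type*} [NormedAddCommGroup V] [InnerProductSpace ℝ V]
    [FiniteDimensional ℝ V] [NormedAddCommGroup W] [InnerProductSpace ℝ W]
    [FiniteDimensional ℝ W]
    (β : V →ₗ[ℝ] V →ₗ[ℝ] W) (hsym : ∀ x y, β x y = β y x)
    (V₁ V₂ : Submodule ℝ V) (hsplit : V₂ = V₁ᗮ)
    -- R(x,u,w,v) = ⟨β(x,v),β(u,w)⟩ − ⟨β(x,w),β(u,v)⟩ = 0 for x ∈ V₁, u,v,w ∈ V₂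
    (hR : ∀ x ∈ V₁, ∀ u ∈ V₂, ∀ v ∈ V₂, ∀ w ∈ V₂,
      ⟪β x v, β u w⟫ - ⟪β x w, β u v⟫ = 0)
    (ℓ : ℕ) (e : Fin ℓ → V) (he : ∀ j, e j ∈ V₂) (hon : Orthonormal ℝ e)
    (hexp : ∀ y ∈ V₁, ∀ v ∈ V₂, β y v = ∑ j, ⟪v, e j⟫ • β y (e j)) :
    ∀ u ∈ V₂, ∀ v ∈ V₂,
      (β u v - ∑ i, ∑ j, (⟪u, e i⟫ * ⟪v, e j⟫) • β (e i) (e j)) ∈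
        (Submodule.span ℝ {w : W | ∃ x ∈ V₁, ∃ y ∈ V₂, w = β x y})ᗮ :=
  stmt_3_general β hsym V₁ V₂ hR ℓ e he hexp
end

section
/- Let f : M → Q be an isometric immersion of a warped product M = M₀ ×_{ρ₁} M₁ × ⋯ ×_{ρ_k} M_k into a space form, with second fundamental form α. Suppose α(X,V) = 0 for all X tangent to M₀ and V tangent to M₁ ⊕ ⋯ ⊕ M_k. Then for U tangent to M_i and V tangent to M_j, i ≠ j, i,j ≥ 1, the Codazzi equation implies α(U,V) ⟨η_i − η_j, X⟩ = 0 for every X tangent to M₀, where η_i = −grad log ρ_i. Consequently, if grad log ρ_i ≠ grad log ρ_j at every point (i.e., the warping functions are pairwise linearly independent), then α(U,V) = 0. -/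
/-!
Apply the Codazzi equation `(∇^⊥_X α)(U,V) = (∇^⊥_U α)(X,V)` with `X` horizontal. Since
`α(X,V) = 0` and `∇_U V = 0`, the right side is `⟪η_i,X⟫ α(U,V)`, which cancels the matching
term on the left and leaves `∇^⊥_X (α(U,V)) = −⟪η_j,X⟫ α(U,V)`. Exchanging the roles of `U` and
`V` gives `−⟪η_i,X⟫ α(U,V)` for the same quantity, so `⟪η_i − η_j, X⟫ α(U,V) = 0`; taking
`X = η_i − η_j` yields the second claim.
-/

open Module RealInnerProductSpace

section Codazzi

variable {R E F : Type*} [CommRing R] [AddCommGroup E] [Module R E] [AddCommGroup F] [Module R F]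
  {Dw : E → E → E} {Dn : E → F → F} {α : E →ₗ[R] E →ₗ[R] F}

theorem normalDeriv_eq_smul_of_codazzi (hDn0 : ∀ e : E, Dn e 0 = 0)
    (hCod : ∀ X Y Z : E,
      Dn X (α Y Z) - α (Dw X Y) Z - α Y (Dw X Z) =
        Dn Y (α X Z) - α (Dw Y X) Z - α X (Dw Y Z))
    {X U V : E} {cU cV : R} (hXU : Dw X U = cU • U) (hUX : Dw U X = cU • U)
    (hXV : Dw X V = cV • V) (hUV : Dw U V = 0) (hαXV : α X V = 0) :
    Dn X (α U V) = cV • α U V := by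
  have h := hCod X U V
  simp only [hXU, hUX, hXV, hUV, hαXV, hDn0, map_smul, LinearMap.smul_apply, map_zero] at h
  linear_combination (norm := module) h

theorem sub_smul_eq_zero_of_codazzi (hDn0 : ∀ e : E, Dn e 0 = 0)
    (hCod : ∀ X Y Z : E,
      Dn X (α Y Z) - α (Dw X Y) Z - α Y (Dw X Z) =
        Dn Y (α X Z) - α (Dw Y X) Z - α X (Dw Y Z))
    (hαsym : ∀ X Y, α X Y = α Y X)
    {X U V : E} {cU cV : R} (hXU : Dw X U = cU • U) (hUX : Dw U X = cU • U)
    (hXV : Dw X V = cV • V) (hVX : Dw V X = cV • V) (hUV : Dw U V = 0) (hVU : Dw V U = 0)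
    (hαXU : α X U = 0) (hαXV : α X V = 0) :
    (cV - cU) • α U V = 0 := by
  have hV := normalDeriv_eq_smul_of_codazzi hDn0 hCod hXU hUX hXV hUV hαXV
  have hU := normalDeriv_eq_smul_of_codazzi hDn0 hCod hXV hVX hXU hVU hαXU
  rw [hαsym V U, hV] at hU
  rw [sub_smul, hU, sub_self]

end Codazzi

theorem stmt_14_general {E F : Type*} [NormedAddCommGroup E] [InnerProductSpace ℝ E]
    [NormedAddCommGroup F] [InnerProductSpace ℝ F]
    (k : ℕ) (P : Fin (k + 1) → E →ₗ[ℝ] E)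
    (hPcomp : ∀ a b, a ≠ b → ∀ X : E, P a (P b X) = 0)
    (η : Fin k → E) (hη : ∀ l, P 0 (η l) = η l)
    (Dw : E → E → E) (Dn : E → F → F) (hDn0 : ∀ e : E, Dn e 0 = 0)
    -- the second fundamental form, a symmetric bilinear map
    (α : E →ₗ[ℝ] E →ₗ[ℝ] F) (hαsym : ∀ X Y, α X Y = α Y X)
    -- α is adapted on mixed pairs involving the base factor
    (hα0 : ∀ X V' : E, P 0 X = X → P 0 V' = 0 → α X V' = 0)
    -- the Codazzi equation (∇^⊥_X α)(Y,Z) = (∇^⊥_Y α)(X,Z)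
    (hCod : ∀ X Y Z : E,
      Dn X (α Y Z) - α (Dw X Y) Z - α Y (Dw X Z) =
        Dn Y (α X Z) - α (Dw Y X) Z - α X (Dw Y Z))
    (i j : Fin k)
    (U V : E) (hU : P i.succ U = U) (hV : P j.succ V = V)
    -- the warped-product connection identities
    (h1 : Dw U V = 0) (h2 : Dw V U = 0)
    (h3 : ∀ X : E, P 0 X = X → Dw X U = -⟪η i, X⟫ • U)
    (h4 : ∀ X : E, P 0 X = X → Dw U X = -⟪η i, X⟫ • U)
    (h5 : ∀ X : E, P 0 X = X → Dw X V = -⟪η j, X⟫ • V)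
    (h6 : ∀ X : E, P 0 X = X → Dw V X = -⟪η j, X⟫ • V) :
    (∀ X : E, P 0 X = X → ⟪η i - η j, X⟫ • α U V = 0) ∧
      (η i ≠ η j → α U V = 0) := by
  have hU0 : P 0 U = 0 := by rw [← hU, hPcomp 0 i.succ (Fin.succ_ne_zero i).symm]
  have hV0 : P 0 V = 0 := by rw [← hV, hPcomp 0 j.succ (Fin.succ_ne_zero j).symm]
  have key : ∀ X : E, P 0 X = X → ⟪η i - η j, X⟫ • α U V = 0 := by
    intro X hX
    have h := sub_smul_eq_zero_of_codazzi hDn0 hCod hαsym (h3 X hX) (h4 X hX) (h5 X hX)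
      (h6 X hX) h1 h2 (hα0 X U hX hU0) (hα0 X V hX hV0)
    rwa [neg_sub_neg, ← inner_sub_left] at h
  refine ⟨key, fun hne => ?_⟩
  have h := key (η i - η j) (by rw [map_sub, hη, hη])
  exact (smul_eq_zero.mp h).resolve_left (inner_self_ne_zero.mpr (sub_ne_zero.mpr hne))

/-- The Codazzi argument for isometric immersions of warped products.  Model: `E`
stands for the vector fields of the warped product `M₀ ×_{ρ₁} M₁ × ⋯ ×_{ρ_k} M_k`
with the warped metric `⟪·,·⟫`, `P a` are the orthogonal projections onto the factor
distributions, `η l = −grad log ρ_l` is tangent to `M₀`, `Dw` is the Levi-Civita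
connection, `F` models the normal bundle with normal connection `Dn`, and `α` is the
second fundamental form, satisfying the Codazzi equation in a space form.  If
`α(X,V') = 0` whenever `X` is tangent to `M₀` and `V'` to `M₁ ⊕ ⋯ ⊕ M_k`, then for
`U` tangent to `M_i`, `V` tangent to `M_j`, `i ≠ j`, one gets
`⟪η_i − η_j, X⟫ • α(U,V) = 0` for all `X` tangent to `M₀`; consequently, if
`η_i ≠ η_j` then `α(U,V) = 0`. -/
theorem stmt_14 {E F : Type*} [NormedAddCommGroup E] [InnerProductSpace ℝ E]
    [NormedAddCommGroup F] [InnerProductSpace ℝ F]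
    (k : ℕ) (P : Fin (k + 1) → E →ₗ[ℝ] E)
    (hPsum : ∀ X : E, ∑ a, P a X = X)
    (hPidem : ∀ a (X : E), P a (P a X) = P a X)
    (hPcomp : ∀ a b, a ≠ b → ∀ X : E, P a (P b X) = 0)
    (hPorth : ∀ a b, a ≠ b → ∀ X Y : E, ⟪P a X, P b Y⟫ = 0)
    (η : Fin k → E) (hη : ∀ l, P 0 (η l) = η l)
    (Dw : E → E → E) (Dn : E → F → F) (hDn0 : ∀ e : E, Dn e 0 = 0)
    -- the second fundamental form, a symmetric bilinear map
    (α : E →ₗ[ℝ] E →ₗ[ℝ] F) (hαsym : ∀ X Y, α X Y = α Y X)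
    -- α is adapted on mixed pairs involving the base factor
    (hα0 : ∀ X V' : E, P 0 X = X → P 0 V' = 0 → α X V' = 0)
    -- the Codazzi equation (∇^⊥_X α)(Y,Z) = (∇^⊥_Y α)(X,Z)
    (hCod : ∀ X Y Z : E,
      Dn X (α Y Z) - α (Dw X Y) Z - α Y (Dw X Z) =
        Dn Y (α X Z) - α (Dw Y X) Z - α X (Dw Y Z))
    (i j : Fin k) (hij : i ≠ j)
    (U V : E) (hU : P i.succ U = U) (hV : P j.succ V = V)
    -- the warped-product connection identities
    (h1 : Dw U V = 0) (h2 : Dw V U = 0)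
    (h3 : ∀ X : E, P 0 X = X → Dw X U = -⟪η i, X⟫ • U)
    (h4 : ∀ X : E, P 0 X = X → Dw U X = -⟪η i, X⟫ • U)
    (h5 : ∀ X : E, P 0 X = X → Dw X V = -⟪η j, X⟫ • V)
    (h6 : ∀ X : E, P 0 X = X → Dw V X = -⟪η j, X⟫ • V) :
    (∀ X : E, P 0 X = X → ⟪η i - η j, X⟫ • α U V = 0) ∧
      (η i ≠ η j → α U V = 0) :=
  stmt_14_general k P hPcomp η hη Dw Dn hDn0 α hαsym hα0 hCod i j U V hU hV h1 h2 h3 h4 h5 h6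
end
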